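/- Let L be a normal subgroup of a group G, and let H, K ≤ G. Suppose there exist subgroups X ≤ H and Y ≤ K with XY ⊇ L. Then G = HK if and only if G/L = (HL/L)(KL/L). -/
import Mathlib


open Pointwise

theorem stmt_8 {G : Type*} [Group G] (L H K X Y : Subgroup G) [L.Normal]
    (hXH : X ≤ H) (hYK : Y ≤ K)
    (hXY : (L : Set G) ⊆ (X : Set G) * (Y : Set G)) :
    (H : Set G) * (K : Set G) = Set.univ ↔
      ((H.map (QuotientGroup.mk' L) : Set (G ⧸ L)) *
        (K.map (QuotientGroup.mk' L) : Set (G ⧸ L)) = Set.univ) := by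
  constructor
  · intro h
    ext q
    simp only [Set.mem_univ, iff_true]
    obtain ⟨g, rfl⟩ := QuotientGroup.mk'_surjective L q
    have : g ∈ (H : Set G) * (K : Set G) := h ▸ Set.mem_univ g
    obtain ⟨a, ha, b, hb, rfl⟩ := this
    exact ⟨QuotientGroup.mk' L a, ⟨a, ha, rfl⟩, QuotientGroup.mk' L b, ⟨b, hb, rfl⟩,
      by simp⟩
  · intro h
    ext g
    simp only [Set.mem_univ, iff_true]
    have : (QuotientGroup.mk' L g : G ⧸ L) ∈
        ((H.map (QuotientGroup.mk' L) : Set (G ⧸ L)) *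
          (K.map (QuotientGroup.mk' L) : Set (G ⧸ L))) := h ▸ Set.mem_univ _
    obtain ⟨a, ⟨h1, hh1, rfl⟩, b, ⟨k1, hk1, rfl⟩, hab⟩ := this
    have hL : (h1 * k1)⁻¹ * g ∈ L := by
      rw [← QuotientGroup.eq]
      simpa using hab
    set l := (h1 * k1)⁻¹ * g with hl
    have hgl : g = h1 * k1 * l := by rw [hl]; group
    have hconj : k1 * l * k1⁻¹ ∈ L := Subgroup.Normal.conj_mem ‹L.Normal› l hL k1
    obtain ⟨x, hx, y, hy, hxy⟩ := hXY hconj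
    refine ⟨h1 * x, H.mul_mem hh1 (hXH hx), y * k1, K.mul_mem (hYK hy) hk1, ?_⟩
    have : g = h1 * (k1 * l * k1⁻¹) * k1 := by rw [hgl]; group
    rw [this, ← hxy]; group
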